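/- arXiv:1607.04407 — 2 statements merged into one kernel-verified Lean document; each statement's English description precedes it below -/
import Mathlib

section
/- Boundary behavior of the NAS adjusted likelihood. Fix a real number z and y ∈ ℝ^m. The function f(A) = A^{(1+z²)/4} · L_RE(A) is continuous on [0,∞), satisfies f(0) = 0, and satisfies f(A) > 0 for every A > 0. -/
/-!
For `A ≥ 0` the matrix `V(A)` is positive definite, hence so is `XᵀV(A)⁻¹X` because `X` has full
column rank. Both determinants in `L_RE` are therefore positive, which makes `L_RE` positive, and,
since matrix inversion is continuous wherever the determinant does not vanish, continuous on
`[0, ∞)`. The exponent `(1 + z²)/4` is positive, so `A ^ ((1 + z²)/4)` is continuous at `0` and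
vanishes there.
-/

open Matrix Real Filter

/-- The diagonal covariance matrix `V(A) = diag(A + D₁, …, A + D_m)`. -/
noncomputable def Vmat {m : ℕ} (D : Fin m → ℝ) (A : ℝ) : Matrix (Fin m) (Fin m) ℝ :=
  Matrix.diagonal (fun i => A + D i)

/-- The residual projection matrix `P(A) = V⁻¹ − V⁻¹X(XᵀV⁻¹X)⁻¹XᵀV⁻¹`. -/
noncomputable def Pmat {m p : ℕ} (X : Matrix (Fin m) (Fin p) ℝ) (D : Fin m → ℝ) (A : ℝ) :
    Matrix (Fin m) (Fin m) ℝ :=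
  (Vmat D A)⁻¹ - (Vmat D A)⁻¹ * X * (Xᵀ * (Vmat D A)⁻¹ * X)⁻¹ * Xᵀ * (Vmat D A)⁻¹

/-- The residual likelihood
`L_RE(A) = det(XᵀV⁻¹X)^{−1/2} · det(V)^{−1/2} · exp(−yᵀP y/2)`. -/
noncomputable def LRE {m p : ℕ} (X : Matrix (Fin m) (Fin p) ℝ) (D : Fin m → ℝ)
    (y : Fin m → ℝ) (A : ℝ) : ℝ :=
  (Xᵀ * (Vmat D A)⁻¹ * X).det ^ (-(1 : ℝ) / 2) * (Vmat D A).det ^ (-(1 : ℝ) / 2) *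
    Real.exp (-(y ⬝ᵥ (Pmat X D A *ᵥ y)) / 2)

theorem Matrix.mulVec_injective_iff_rank_eq_card {m n K : Type*} [Fintype n] [Field K]
    {M : Matrix m n K} : Function.Injective M.mulVec ↔ M.rank = Fintype.card n := by
  rw [Matrix.mulVec_injective_iff, linearIndependent_iff_card_eq_finrank_span,
    M.rank_eq_finrank_span_cols, eq_comm]
  rfl

theorem ContinuousAt.matrix_inv₀ {α n K : Type*} [TopologicalSpace α] [Fintype n] [DecidableEq n]
    [Field K] [TopologicalSpace K] [IsTopologicalRing K] [ContinuousInv₀ K]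
    {f : α → Matrix n n K} {a : α} (hf : ContinuousAt f a) (ha : (f a).det ≠ 0) :
    ContinuousAt (fun x => (f x)⁻¹) a := by
  refine ContinuousAt.comp (g := Inv.inv) ?_ hf
  exact continuousAt_matrix_inv _ (by rw [Ring.inverse_eq_inv']; exact continuousAt_inv₀ ha)

section

variable {m p : ℕ} (X : Matrix (Fin m) (Fin p) ℝ) {D : Fin m → ℝ} (y : Fin m → ℝ) {A : ℝ}

theorem posDef_Vmat (hA : 0 ≤ A) (hD : ∀ i, 0 < D i) : (Vmat D A).PosDef :=
  .diagonal fun i => add_pos_of_nonneg_of_pos hA (hD i)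

theorem posDef_transpose_mul_inv_Vmat_mul (hV : (Vmat D A).PosDef)
    (hX : Function.Injective X.mulVec) : (Xᵀ * (Vmat D A)⁻¹ * X).PosDef := by
  simpa only [conjTranspose_eq_transpose_of_trivial] using hV.inv.conjTranspose_mul_mul_same hX

theorem LRE_pos (hV : 0 < (Vmat D A).det) (hG : 0 < (Xᵀ * (Vmat D A)⁻¹ * X).det) :
    0 < LRE X D y A :=
  mul_pos (mul_pos (rpow_pos_of_pos hG _) (rpow_pos_of_pos hV _)) (exp_pos _)

@[fun_prop]
theorem continuous_Vmat (D : Fin m → ℝ) : Continuous (Vmat D) := by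
  unfold Vmat
  fun_prop

theorem continuousAt_LRE (hV : (Vmat D A).det ≠ 0) (hG : (Xᵀ * (Vmat D A)⁻¹ * X).det ≠ 0) :
    ContinuousAt (LRE X D y) A := by
  have hVinv : ContinuousAt (fun B => (Vmat D B)⁻¹) A :=
    (continuous_Vmat D).continuousAt.matrix_inv₀ hV
  have hGram : ContinuousAt (fun B => Xᵀ * (Vmat D B)⁻¹ * X) A := by fun_prop
  have hP : ContinuousAt (Pmat X D) A := by
    have hGinv := hGram.matrix_inv₀ hG
    unfold Pmat
    fun_prop
  have hGdet : ContinuousAt (fun B => (Xᵀ * (Vmat D B)⁻¹ * X).det) A := by fun_prop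
  have hVdet : ContinuousAt (fun B => (Vmat D B).det) A := by fun_prop
  unfold LRE
  exact ((hGdet.rpow_const (Or.inl hG)).mul (hVdet.rpow_const (Or.inl hV))).mul (by fun_prop)

end

theorem nas_adjusted_likelihood_boundary_general {m p : ℕ}
    (X : Matrix (Fin m) (Fin p) ℝ) (hrank : X.rank = p)
    (D : Fin m → ℝ) (hD : ∀ j, 0 < D j)
    (z : ℝ) (y : Fin m → ℝ) :
    ContinuousOn (fun A : ℝ => A ^ ((1 + z ^ 2) / 4) * LRE X D y A) (Set.Ici 0) ∧
    (0 : ℝ) ^ ((1 + z ^ 2) / 4) * LRE X D y 0 = 0 ∧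
    ∀ A : ℝ, 0 < A → 0 < A ^ ((1 + z ^ 2) / 4) * LRE X D y A := by
  have hX : Function.Injective X.mulVec :=
    Matrix.mulVec_injective_iff_rank_eq_card.mpr (hrank.trans (Fintype.card_fin p).symm)
  have hV (A : ℝ) (hA : 0 ≤ A) := posDef_Vmat hA hD
  have hG (A : ℝ) (hA : 0 ≤ A) := posDef_transpose_mul_inv_Vmat_mul X (hV A hA) hX
  have hexp : 0 < (1 + z ^ 2) / 4 := by positivity
  refine ⟨fun A hA => ?_, by rw [zero_rpow hexp.ne', zero_mul], fun A hA => ?_⟩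
  · exact ((continuousAt_rpow_const A _ (Or.inr hexp.le)).mul
      (continuousAt_LRE X y (hV A hA).det_pos.ne' (hG A hA).det_pos.ne')).continuousWithinAt
  · exact mul_pos (rpow_pos_of_pos hA _)
      (LRE_pos X y (hV A hA.le).det_pos (hG A hA.le).det_pos)

/-- Boundary behavior of the NAS adjusted likelihood: `f(A) = A^{(1+z²)/4}·L_RE(A)`
is continuous on `[0,∞)`, `f(0) = 0`, and `f(A) > 0` for every `A > 0`. -/
theorem nas_adjusted_likelihood_boundary {m p : ℕ} (hm : 0 < m) (hp : 0 < p)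
    (X : Matrix (Fin m) (Fin p) ℝ) (hrank : X.rank = p)
    (D : Fin m → ℝ) (hD : ∀ j, 0 < D j)
    (z : ℝ) (y : Fin m → ℝ) :
    ContinuousOn (fun A : ℝ => A ^ ((1 + z ^ 2) / 4) * LRE X D y A) (Set.Ici 0) ∧
    (0 : ℝ) ^ ((1 + z ^ 2) / 4) * LRE X D y 0 = 0 ∧
    ∀ A : ℝ, 0 < A → 0 < A ^ ((1 + z ^ 2) / 4) * LRE X D y A :=
  nas_adjusted_likelihood_boundary_general X hrank D hD z y
end

section
/- Tail decay of the adjusted likelihood for I^{(c)}. Fix a real number z, y ∈ ℝ^m, and an index i with 1 ≤ i ≤ m. The function A^{(1+z²)/4}·(A+D_i)^{(7−z²)/4}·L_RE(A) is bounded above by det(XᵀX)^{−1/2}·A^{(1+z²)/4}·(A+D_i)^{(7−z²)/4}·(A+max_j D_j)^{p/2}·(A+min_j D_j)^{−m/2}, which is O(A^{2−(m−p)/2}) as A → ∞; in particular, if m > p + 4, then A^{(1+z²)/4}·(A+D_i)^{(7−z²)/4}·L_RE(A) → 0 as A → ∞. -/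
open Matrix Real Filter

/-!
Both determinant factors of `L_RE` are controlled by the extreme variances. Since
`(A + D_max)⁻¹ ≤ (A + D_j)⁻¹` for every `j`, the Loewner order gives
`(A + D_max)⁻¹ XᵀX ≤ XᵀV⁻¹X`, and the determinant is monotone on positive definite
matrices, so `det(XᵀV⁻¹X)^{-1/2} ≤ (A + D_max)^{p/2} det(XᵀX)^{-1/2}`; similarly
`det V^{-1/2} ≤ (A + D_min)^{-m/2}`. The exponential factor is at most `1` because `P` is the
Schur complement of `XᵀV⁻¹X` in the positive semidefinite block matrix `[X 1]ᵀ V⁻¹ [X 1]`.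
Each `(A + d)^e` is `O(A^e)`, so the bound is `O(A^{2 - (m - p)/2})`, which tends to `0`
when `m > p + 4`.
-/

open Asymptotics

namespace Matrix

variable {m n : Type*} [Fintype n]

theorem mulVec_injective_of_rank_eq {K : Type*} [Field K] {X : Matrix m n K}
    (hX : X.rank = Fintype.card n) : Function.Injective X.mulVec :=
  mulVec_injective_iff.mpr <| linearIndependent_iff_card_eq_finrank_span.mpr <| by
    rw [← hX, rank_eq_finrank_span_cols, Set.finrank]

variable [DecidableEq n]

theorem PosSemidef.one_le_det_one_add {M : Matrix n n ℝ} (hM : M.PosSemidef) :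
    1 ≤ (1 + M).det := by
  set U : Matrix n n ℝ := (hM.1.eigenvectorUnitary : Matrix n n ℝ)
  have hdiag : 1 + M = U * diagonal (1 + hM.1.eigenvalues) * star U := by
    conv_lhs => rw [hM.1.spectral_theorem]
    rw [← map_one (Unitary.conjStarAlgAut ℝ _ _), ← map_add, ← diagonal_one, diagonal_add]
    rfl
  rw [hdiag, det_mul_comm, ← Matrix.mul_assoc, Unitary.coe_star_mul_self, Matrix.one_mul,
    det_diagonal]
  exact Finset.one_le_prod fun i _ => le_add_of_nonneg_right (hM.eigenvalues_nonneg i)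

open scoped MatrixOrder in
theorem PosDef.det_le_det_of_posSemidef_sub {A B : Matrix n n ℝ} (hA : A.PosDef)
    (hAB : (B - A).PosSemidef) : A.det ≤ B.det := by
  set S := CFC.sqrt A
  have hS : S.PosSemidef := (CFC.sqrt_nonneg A).posSemidef
  have hSS : S * S = A := CFC.sqrt_mul_sqrt_self A hA.posSemidef.nonneg
  have hSu : IsUnit S.det := isUnit_of_mul_isUnit_left (x := S.det) (y := S.det) <| by
    rw [← det_mul, hSS]; exact hA.det_pos.ne'.isUnit
  have hM : (S⁻¹ * (B - A) * S⁻¹).PosSemidef := by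
    have h := hAB.conjTranspose_mul_mul_same S⁻¹
    rwa [conjTranspose_nonsing_inv, hS.1.eq] at h
  have hB : S * (1 + S⁻¹ * (B - A) * S⁻¹) * S = B := by
    have h : S * (1 + S⁻¹ * (B - A) * S⁻¹) * S =
        S * S + (S * S⁻¹) * (B - A) * (S⁻¹ * S) := by
      noncomm_ring
    rw [h, mul_nonsing_inv S hSu, nonsing_inv_mul S hSu, Matrix.one_mul, Matrix.mul_one, hSS]
    abel
  calc A.det = S.det * 1 * S.det := by rw [mul_one, ← det_mul, hSS]
    _ ≤ S.det * (1 + S⁻¹ * (B - A) * S⁻¹).det * S.det := by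
      have := hS.det_nonneg
      gcongr
      exact hM.one_le_det_one_add
    _ = B.det := by rw [← det_mul, ← det_mul, hB]

theorem PosSemidef.sub_mul_mul_inv_mul_mul [Fintype m] [DecidableEq m] {K : Type*} [Field K]
    [PartialOrder K] [StarRing K] [StarOrderedRing K] {W : Matrix m m K} (hW : W.PosSemidef)
    (X : Matrix m n K) (hG : (Xᴴ * W * X).PosDef) :
    (W - W * X * (Xᴴ * W * X)⁻¹ * Xᴴ * W).PosSemidef := by
  have := hG.isUnit.invertible
  have hblock : (fromBlocks (Xᴴ * W * X) (Xᴴ * W) (Xᴴ * W)ᴴ W).PosSemidef := by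
    have h := hW.conjTranspose_mul_mul_same (fromCols X (1 : Matrix m m K))
    rw [conjTranspose_fromCols_eq_fromRows_conjTranspose, fromRows_mul, fromRows_mul_fromCols]
      at h
    simpa [hW.1.eq, Matrix.mul_assoc] using h
  have h := (PosDef.fromBlocks₁₁ (Xᴴ * W) W hG).mp hblock
  simpa [hW.1.eq, Matrix.mul_assoc] using h

end Matrix

theorem isBigO_add_const_rpow (d e : ℝ) :
    (fun A : ℝ => (A + d) ^ e) =O[atTop] fun A => A ^ e := by
  have h : (fun A : ℝ => A + d) ~[atTop] id :=
    IsEquivalent.refl.add_const_of_norm_tendsto_atTop tendsto_norm_atTop_atTop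
  refine (IsTheta.rpow ?_ ?_ h.isTheta).isBigO
  · filter_upwards [eventually_ge_atTop (-d)] with A hA using neg_le_iff_add_nonneg.mp hA
  · filter_upwards [eventually_ge_atTop 0] with A hA using hA

theorem Asymptotics.IsBigO.mul_add_const_rpow {f : ℝ → ℝ} {e : ℝ}
    (hf : f =O[atTop] fun A => A ^ e) (d e' : ℝ) :
    (fun A => f A * (A + d) ^ e') =O[atTop] fun A => A ^ (e + e') := by
  refine (hf.mul (isBigO_add_const_rpow d e')).trans_eventuallyEq ?_
  filter_upwards [eventually_gt_atTop 0] with A hA using (rpow_add hA e e').symm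

theorem tendsto_zero_of_le_of_isBigO_rpow {f g : ℝ → ℝ} {e : ℝ} (he : e < 0)
    (hf : ∀ᶠ A in atTop, 0 ≤ f A) (hfg : ∀ᶠ A in atTop, f A ≤ g A)
    (hg : g =O[atTop] fun A => A ^ e) : Tendsto f atTop (nhds 0) := by
  have hdecay : Tendsto (fun A : ℝ => A ^ e) atTop (nhds 0) := by
    simpa using tendsto_rpow_neg_atTop (neg_pos.2 he)
  exact squeeze_zero' hf hfg (hg.trans_tendsto hdecay)

section ResidualLikelihood

variable {m p : ℕ} {X : Matrix (Fin m) (Fin p) ℝ} (D : Fin m → ℝ) {A : ℝ}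

theorem Vmat_inv (hV : ∀ j, A + D j ≠ 0) :
    (Vmat D A)⁻¹ = diagonal fun j => (A + D j)⁻¹ := by
  refine inv_eq_right_inv ?_
  rw [Vmat, diagonal_mul_diagonal, ← diagonal_one]
  exact congrArg diagonal (funext fun j => mul_inv_cancel₀ (hV j))

theorem det_Vmat : (Vmat D A).det = ∏ j, (A + D j) := det_diagonal

theorem posDef_Vmat_s16 (hV : ∀ j, 0 < A + D j) : (Vmat D A).PosDef := PosDef.diagonal hV

theorem posDef_transpose_mul_Vmat_inv_mul (hX : Function.Injective X.mulVec)
    (hV : ∀ j, 0 < A + D j) : (Xᵀ * (Vmat D A)⁻¹ * X).PosDef := by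
  simpa only [conjTranspose_eq_transpose_of_trivial] using
    (posDef_Vmat_s16 D hV).inv.conjTranspose_mul_mul_same hX

theorem dotProduct_Pmat_mulVec_nonneg (hX : Function.Injective X.mulVec)
    (hV : ∀ j, 0 < A + D j) (y : Fin m → ℝ) : 0 ≤ y ⬝ᵥ (Pmat X D A *ᵥ y) := by
  have hG := posDef_transpose_mul_Vmat_inv_mul D hX hV
  rw [← conjTranspose_eq_transpose_of_trivial] at hG
  have hP := (posDef_Vmat_s16 D hV).inv.posSemidef.sub_mul_mul_inv_mul_mul X hG
  rw [Pmat]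
  simpa only [conjTranspose_eq_transpose_of_trivial, star_trivial] using
    hP.dotProduct_mulVec_nonneg y

theorem det_transpose_mul_Vmat_inv_mul_ge (hX : Function.Injective X.mulVec)
    (hV : ∀ j, 0 < A + D j) {Dmax : ℝ} (hVmax : 0 < A + Dmax) (hmax : ∀ j, D j ≤ Dmax) :
    (A + Dmax)⁻¹ ^ p * (Xᵀ * X).det ≤ (Xᵀ * (Vmat D A)⁻¹ * X).det := by
  have hXX : (Xᵀ * X).PosDef := by
    simpa only [conjTranspose_eq_transpose_of_trivial] using PosDef.conjTranspose_mul_self X hX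
  have hdiff : (Xᵀ * (Vmat D A)⁻¹ * X - (A + Dmax)⁻¹ • (Xᵀ * X)).PosSemidef := by
    have hW : ((Vmat D A)⁻¹ - (A + Dmax)⁻¹ • 1).PosSemidef := by
      rw [Vmat_inv D fun j => (hV j).ne', smul_one_eq_diagonal, diagonal_sub]
      exact PosSemidef.diagonal fun j => sub_nonneg.2 <|
        inv_anti₀ (hV j) (by linarith [hmax j])
    have h := hW.conjTranspose_mul_mul_same X
    rwa [conjTranspose_eq_transpose_of_trivial, Matrix.mul_sub, Matrix.sub_mul, Matrix.mul_smul,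
      Matrix.smul_mul, Matrix.mul_one] at h
  simpa only [det_smul, Fintype.card_fin] using
    (hXX.smul (inv_pos.2 hVmax)).det_le_det_of_posSemidef_sub hdiff

theorem LRE_nonneg (hX : Function.Injective X.mulVec) (hV : ∀ j, 0 < A + D j)
    (y : Fin m → ℝ) : 0 ≤ LRE X D y A := by
  have hG := (posDef_transpose_mul_Vmat_inv_mul D hX hV).det_pos
  have hVdet := (posDef_Vmat_s16 D hV).det_pos
  unfold LRE
  positivity

theorem LRE_le (hX : Function.Injective X.mulVec) (y : Fin m → ℝ) {Dmax Dmin : ℝ}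
    (hmax : ∀ j, D j ≤ Dmax) (hmin : ∀ j, Dmin ≤ D j) (hVmin : 0 < A + Dmin)
    (hVmax : 0 < A + Dmax) :
    LRE X D y A ≤
      (Xᵀ * X).det ^ (-(1 : ℝ) / 2) * (A + Dmax) ^ ((p : ℝ) / 2) *
        (A + Dmin) ^ (-(m : ℝ) / 2) := by
  have hV : ∀ j, 0 < A + D j := fun j => hVmin.trans_le (by linarith [hmin j])
  have hXX : 0 < (Xᵀ * X).det := by
    simpa only [conjTranspose_eq_transpose_of_trivial] using
      (PosDef.conjTranspose_mul_self X hX).det_pos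
  have hgram : (Xᵀ * (Vmat D A)⁻¹ * X).det ^ (-(1 : ℝ) / 2) ≤
      (Xᵀ * X).det ^ (-(1 : ℝ) / 2) * (A + Dmax) ^ ((p : ℝ) / 2) :=
    calc (Xᵀ * (Vmat D A)⁻¹ * X).det ^ (-(1 : ℝ) / 2)
        ≤ ((A + Dmax)⁻¹ ^ p * (Xᵀ * X).det) ^ (-(1 : ℝ) / 2) :=
          rpow_le_rpow_of_nonpos (by positivity)
            (det_transpose_mul_Vmat_inv_mul_ge D hX hV hVmax hmax) (by norm_num)
      _ = (Xᵀ * X).det ^ (-(1 : ℝ) / 2) * (A + Dmax) ^ ((p : ℝ) / 2) := by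
          rw [mul_rpow (by positivity) hXX.le, mul_comm, inv_pow, ← rpow_natCast,
            inv_rpow (by positivity), ← rpow_mul hVmax.le, ← rpow_neg hVmax.le]
          ring_nf
  have hcov : (Vmat D A).det ^ (-(1 : ℝ) / 2) ≤ (A + Dmin) ^ (-(m : ℝ) / 2) := by
    have hlow : (A + Dmin) ^ m ≤ (Vmat D A).det :=
      calc (A + Dmin) ^ m = ∏ _j : Fin m, (A + Dmin) := by simp
        _ ≤ (Vmat D A).det := by
          rw [det_Vmat]
          exact Finset.prod_le_prod (fun _ _ => hVmin.le) fun j _ => by linarith [hmin j]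
    calc (Vmat D A).det ^ (-(1 : ℝ) / 2) ≤ ((A + Dmin) ^ m) ^ (-(1 : ℝ) / 2) :=
          rpow_le_rpow_of_nonpos (by positivity) hlow (by norm_num)
      _ = (A + Dmin) ^ (-(m : ℝ) / 2) := by
          rw [← rpow_natCast, ← rpow_mul hVmin.le]
          ring_nf
  have hexp : exp (-(y ⬝ᵥ (Pmat X D A *ᵥ y)) / 2) ≤ 1 :=
    exp_le_one_iff.2 (by linarith [dotProduct_Pmat_mulVec_nonneg D hX hV y])
  unfold LRE
  calc _ ≤ ((Xᵀ * X).det ^ (-(1 : ℝ) / 2) * (A + Dmax) ^ ((p : ℝ) / 2)) *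
        (A + Dmin) ^ (-(m : ℝ) / 2) * 1 := by
        gcongr
        exact rpow_nonneg (posDef_Vmat_s16 D hV).det_pos.le _
    _ = _ := mul_one _

end ResidualLikelihood

theorem c_adjusted_likelihood_tail_general {m p : ℕ} (hm : 0 < m)
    (X : Matrix (Fin m) (Fin p) ℝ) (hrank : X.rank = p)
    (D : Fin m → ℝ) (hD : ∀ j, 0 < D j)
    (z : ℝ) (y : Fin m → ℝ) (i : Fin m)
    (Dmax Dmin : ℝ)
    (hDmax : Dmax =
      Finset.univ.sup' (Finset.univ_nonempty_iff.mpr (Fin.pos_iff_nonempty.mp hm)) D)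
    (hDmin : Dmin =
      Finset.univ.inf' (Finset.univ_nonempty_iff.mpr (Fin.pos_iff_nonempty.mp hm)) D) :
    (∀ A : ℝ, 0 < A →
      A ^ ((1 + z ^ 2) / 4) * (A + D i) ^ ((7 - z ^ 2) / 4) * LRE X D y A ≤
        (Xᵀ * X).det ^ (-(1 : ℝ) / 2) * A ^ ((1 + z ^ 2) / 4) *
          (A + D i) ^ ((7 - z ^ 2) / 4) * (A + Dmax) ^ ((p : ℝ) / 2) *
            (A + Dmin) ^ (-(m : ℝ) / 2)) ∧
    (fun A : ℝ =>
        (Xᵀ * X).det ^ (-(1 : ℝ) / 2) * A ^ ((1 + z ^ 2) / 4) *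
          (A + D i) ^ ((7 - z ^ 2) / 4) * (A + Dmax) ^ ((p : ℝ) / 2) *
            (A + Dmin) ^ (-(m : ℝ) / 2))
      =O[Filter.atTop] (fun A : ℝ => A ^ (2 - ((m : ℝ) - (p : ℝ)) / 2)) ∧
    (m > p + 4 →
      Filter.Tendsto
        (fun A : ℝ => A ^ ((1 + z ^ 2) / 4) * (A + D i) ^ ((7 - z ^ 2) / 4) * LRE X D y A)
        Filter.atTop (nhds 0)) := by
  have hX : Function.Injective X.mulVec :=
    mulVec_injective_of_rank_eq (by rwa [Fintype.card_fin])
  have hmax : ∀ j, D j ≤ Dmax := fun j => hDmax ▸ Finset.le_sup' D (Finset.mem_univ j)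
  have hmin : ∀ j, Dmin ≤ D j := fun j => hDmin ▸ Finset.inf'_le D (Finset.mem_univ j)
  have hDmin_pos : 0 < Dmin := hDmin ▸ (Finset.lt_inf'_iff _).2 fun j _ => hD j
  have hbound : ∀ A : ℝ, 0 < A →
      A ^ ((1 + z ^ 2) / 4) * (A + D i) ^ ((7 - z ^ 2) / 4) * LRE X D y A ≤
        (Xᵀ * X).det ^ (-(1 : ℝ) / 2) * A ^ ((1 + z ^ 2) / 4) *
          (A + D i) ^ ((7 - z ^ 2) / 4) * (A + Dmax) ^ ((p : ℝ) / 2) *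
            (A + Dmin) ^ (-(m : ℝ) / 2) := fun A hA => by
    have := hD i
    calc _ ≤ A ^ ((1 + z ^ 2) / 4) * (A + D i) ^ ((7 - z ^ 2) / 4) *
          ((Xᵀ * X).det ^ (-(1 : ℝ) / 2) * (A + Dmax) ^ ((p : ℝ) / 2) *
            (A + Dmin) ^ (-(m : ℝ) / 2)) := by
          gcongr
          exact LRE_le D hX y hmax hmin (by linarith) (by linarith [hmin i, hmax i])
      _ = _ := by ring
  have hbigO := (isBigO_refl (fun A : ℝ => A ^ ((1 + z ^ 2) / 4)) atTop).const_mul_left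
      ((Xᵀ * X).det ^ (-(1 : ℝ) / 2)) |>.mul_add_const_rpow (D i) ((7 - z ^ 2) / 4)
    |>.mul_add_const_rpow Dmax ((p : ℝ) / 2) |>.mul_add_const_rpow Dmin (-(m : ℝ) / 2)
  rw [show (1 + z ^ 2) / 4 + (7 - z ^ 2) / 4 + (p : ℝ) / 2 + -(m : ℝ) / 2 =
    2 - ((m : ℝ) - (p : ℝ)) / 2 by ring] at hbigO
  refine ⟨hbound, hbigO, fun hmp => tendsto_zero_of_le_of_isBigO_rpow ?_ ?_ ?_ hbigO⟩
  · have : (p : ℝ) + 4 < m := by exact_mod_cast hmp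
    linarith
  · filter_upwards [eventually_gt_atTop 0] with A hA
    have := LRE_nonneg D hX (fun j => by linarith [hD j]) y (A := A)
    have := hD i
    positivity
  · filter_upwards [eventually_gt_atTop 0] with A hA using hbound A hA

/-- Tail decay of the adjusted likelihood for `I^{(c)}`: the function
`A^{(1+z²)/4}·(A+D_i)^{(7−z²)/4}·L_RE(A)` is bounded above by
`det(XᵀX)^{−1/2}·A^{(1+z²)/4}·(A+D_i)^{(7−z²)/4}·(A+max_j D_j)^{p/2}·(A+min_j D_j)^{−m/2}`,
which is `O(A^{2−(m−p)/2})` as `A → ∞`; in particular, if `m > p + 4`, then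
`A^{(1+z²)/4}·(A+D_i)^{(7−z²)/4}·L_RE(A) → 0` as `A → ∞`. -/
theorem c_adjusted_likelihood_tail {m p : ℕ} (hm : 0 < m) (hp : 0 < p)
    (X : Matrix (Fin m) (Fin p) ℝ) (hrank : X.rank = p)
    (D : Fin m → ℝ) (hD : ∀ j, 0 < D j)
    (z : ℝ) (y : Fin m → ℝ) (i : Fin m)
    (Dmax Dmin : ℝ)
    (hDmax : Dmax =
      Finset.univ.sup' (Finset.univ_nonempty_iff.mpr (Fin.pos_iff_nonempty.mp hm)) D)
    (hDmin : Dmin =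
      Finset.univ.inf' (Finset.univ_nonempty_iff.mpr (Fin.pos_iff_nonempty.mp hm)) D) :
    (∀ A : ℝ, 0 < A →
      A ^ ((1 + z ^ 2) / 4) * (A + D i) ^ ((7 - z ^ 2) / 4) * LRE X D y A ≤
        (Xᵀ * X).det ^ (-(1 : ℝ) / 2) * A ^ ((1 + z ^ 2) / 4) *
          (A + D i) ^ ((7 - z ^ 2) / 4) * (A + Dmax) ^ ((p : ℝ) / 2) *
            (A + Dmin) ^ (-(m : ℝ) / 2)) ∧
    (fun A : ℝ =>
        (Xᵀ * X).det ^ (-(1 : ℝ) / 2) * A ^ ((1 + z ^ 2) / 4) *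
          (A + D i) ^ ((7 - z ^ 2) / 4) * (A + Dmax) ^ ((p : ℝ) / 2) *
            (A + Dmin) ^ (-(m : ℝ) / 2))
      =O[Filter.atTop] (fun A : ℝ => A ^ (2 - ((m : ℝ) - (p : ℝ)) / 2)) ∧
    (m > p + 4 →
      Filter.Tendsto
        (fun A : ℝ => A ^ ((1 + z ^ 2) / 4) * (A + D i) ^ ((7 - z ^ 2) / 4) * LRE X D y A)
        Filter.atTop (nhds 0)) :=
  c_adjusted_likelihood_tail_general hm X hrank D hD z y i Dmax Dmin hDmax hDmin
end
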